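/- arXiv:1112.0693 — 2 statements merged into one kernel-verified Lean document; each statement's English description precedes it below -/
import Mathlib

section
/- Let β > 0 be a real number and p ≥ 1 an integer. Then the generalized binomial coefficient satisfies |C(β,p)| ≤ e^{β²+β} / p^{β+1}, where C(β,p) = β(β−1)⋯(β−p+1)/p! = Γ(β+1)/(Γ(β−p+1)·p!). -/
/-!
Splitting off the factor `β / p`, the remaining factors of `C(β, p)` are `β / i - 1` for
`1 ≤ i < p`. Since `|x - 1| ≤ exp (x² / 2 - x)` for every real `x`, their product is at most
`exp (β² / 2 · ∑ 1 / i² - β · H_{p-1})`; the bounds `∑ 1 / i² ≤ 2` and `log p ≤ H_{p-1}` turn this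
into `exp (β²) / p ^ β`, and `β ≤ exp β` takes care of the split-off factor.
-/

open Real Finset

theorem abs_sub_one_le_exp_sq_div_two_sub (x : ℝ) : |x - 1| ≤ exp (x ^ 2 / 2 - x) := by
  rcases le_total x 1 with h | h
  · rw [abs_sub_comm, abs_of_nonneg (by linarith)]
    calc 1 - x ≤ exp (-x) := by linarith [add_one_le_exp (-x)]
      _ ≤ exp (x ^ 2 / 2 - x) := exp_le_exp.2 (by nlinarith)
  · rw [abs_of_nonneg (by linarith)]
    calc x - 1 ≤ exp (x - 2) := by linarith [add_one_le_exp (x - 2)]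
      _ ≤ exp (x ^ 2 / 2 - x) := exp_le_exp.2 (by nlinarith [sq_nonneg (x - 2)])

theorem sum_range_inv_add_one_sq_le_two (n : ℕ) : ∑ i ∈ range n, (((i : ℝ) + 1) ^ 2)⁻¹ ≤ 2 := by
  have h := sum_Ioo_inv_sq_le (α := ℝ) 0 (n + 1)
  rw [← Ico_add_one_left_eq_Ioo, sum_Ico_eq_sum_range] at h
  simpa [add_comm] using h

theorem prod_abs_div_add_one_sub_one_le {β : ℝ} (hβ : 0 ≤ β) (n : ℕ) :
    ∏ i ∈ range n, |β / (i + 1) - 1| ≤ exp (β ^ 2) / ((n : ℝ) + 1) ^ β := by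
  have hlog : log (n + 1) ≤ harmonic n := by exact_mod_cast log_add_one_le_harmonic n
  have hbasel := sum_range_inv_add_one_sq_le_two n
  calc ∏ i ∈ range n, |β / (i + 1) - 1|
      ≤ ∏ i ∈ range n, exp ((β / (i + 1)) ^ 2 / 2 - β / (i + 1)) :=
        prod_le_prod (fun _ _ => abs_nonneg _) fun _ _ => abs_sub_one_le_exp_sq_div_two_sub _
    _ = exp (β ^ 2 / 2 * ∑ i ∈ range n, (((i : ℝ) + 1) ^ 2)⁻¹ - β * harmonic n) := by
        rw [← exp_sum, sum_sub_distrib, mul_sum, harmonic, Rat.cast_sum, mul_sum]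
        push_cast
        congr 2
        exact sum_congr rfl fun i _ => by field_simp
    _ ≤ exp (β ^ 2 - β * log (n + 1)) := by
        gcongr exp (?_ - β * ?_)
        linarith [mul_le_mul_of_nonneg_left hbasel (by positivity : 0 ≤ β ^ 2 / 2)]
    _ = exp (β ^ 2) / ((n : ℝ) + 1) ^ β := by
        rw [exp_sub, rpow_def_of_pos (by positivity), mul_comm]

theorem prod_range_succ_sub_div_factorial (β : ℝ) (n : ℕ) :
    (∏ j ∈ range (n + 1), (β - j)) / (n + 1).factorial =
      β / (n + 1) * ∏ i ∈ range n, (β / (i + 1) - 1) := by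
  induction n with
  | zero => simp
  | succ n ih =>
    rw [prod_range_succ _ (n + 1), Nat.factorial_succ (n + 1), Nat.cast_mul,
      mul_comm ((n + 1 + 1 : ℕ) : ℝ), ← div_mul_div_comm, ih, prod_range_succ]
    push_cast
    field_simp

/-- Bound on the generalized binomial coefficient:
`|C(β,p)| = |β(β-1)⋯(β-p+1)/p!| ≤ e^{β²+β}/p^{β+1}` for `β > 0` and `p ≥ 1`. -/
theorem abs_generalized_binomial_le
    (β : ℝ) (hβ : 0 < β) (p : ℕ) (hp : 1 ≤ p) :
    |(∏ j ∈ Finset.range p, (β - j)) / (Nat.factorial p)| ≤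
      Real.exp (β ^ 2 + β) / (p : ℝ) ^ (β + 1) := by
  obtain ⟨n, rfl⟩ := Nat.exists_eq_add_of_le' hp
  rw [prod_range_succ_sub_div_factorial, abs_mul, abs_div, abs_of_pos hβ,
    abs_of_pos (by positivity : (0 : ℝ) < n + 1), abs_prod]
  push_cast
  calc β / (n + 1) * ∏ i ∈ range n, |β / (i + 1) - 1|
      ≤ exp β / (n + 1) * (exp (β ^ 2) / ((n : ℝ) + 1) ^ β) := by
        gcongr
        · linarith [add_one_le_exp β]
        · exact prod_abs_div_add_one_sub_one_le hβ.le n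
    _ = exp (β ^ 2 + β) / ((n : ℝ) + 1) ^ (β + 1) := by
        rw [exp_add, rpow_add_one (by positivity)]
        field_simp
end

section
/- Let β > 0 be a real number and N ≥ 1 an integer. Then the tail of the series of absolute values of generalized binomial coefficients satisfies Σ_{p=N+1}^{∞} |C(β,p)| ≤ e^{β²+β} / (β·N^{β}), where C(β,p) = β(β−1)⋯(β−p+1)/p!. -/
/-!
Write `C(β, p) = (∏ j < p, (β - j)) / p!`. Peeling off the factor `j = 0` gives
`p · C(β, p) = ± β ∏ j < p - 1, (1 - β / (j + 1))`, and `|1 - x| ≤ 1 - x + x² / 2 ≤ exp (x² / 2 - x)`.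
With `∑ 1 / j² ≤ 2` and `log p ≤ H_{p-1}` this yields `p ^ (β + 1) |C(β, p)| ≤ β e^{β²} ≤ e^{β² + β}`.
The tail `∑_{p > N} p ^ (-β - 1)` is at most `∫_N^∞ x ^ (-β - 1) dx = 1 / (β N ^ β)`.
-/

open Real Finset

noncomputable def genBinom (β : ℝ) (p : ℕ) : ℝ :=
  (∏ j ∈ range p, (β - j)) / p.factorial

lemma abs_one_sub_le_exp (x : ℝ) : |1 - x| ≤ exp (x ^ 2 / 2 - x) :=
  calc |1 - x| ≤ x ^ 2 / 2 - x + 1 :=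
        abs_le.2 ⟨by nlinarith [sq_nonneg (x - 2)], by nlinarith [sq_nonneg x]⟩
    _ ≤ exp (x ^ 2 / 2 - x) := add_one_le_exp _

lemma sum_range_inv_succ_sq_le_two (n : ℕ) : ∑ j ∈ range n, (((j : ℝ) + 1) ^ 2)⁻¹ ≤ 2 := by
  have := sum_Ioo_inv_sq_le (α := ℝ) 0 (n + 1)
  rw [← Ico_add_one_left_eq_Ioo, ← sum_Ico_add'] at this
  simpa using this

lemma prod_abs_one_sub_div_le (β : ℝ) (hβ : 0 ≤ β) (n : ℕ) :
    ∏ j ∈ range n, |1 - β / (j + 1)| ≤ exp (β ^ 2 - β * log (n + 1)) := by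
  calc ∏ j ∈ range n, |1 - β / (j + 1)|
      ≤ ∏ j ∈ range n, exp ((β / (j + 1)) ^ 2 / 2 - β / (j + 1)) :=
        prod_le_prod (fun _ _ => abs_nonneg _) (fun _ _ => abs_one_sub_le_exp _)
    _ = exp (β ^ 2 / 2 * ∑ j ∈ range n, (((j : ℝ) + 1) ^ 2)⁻¹ - β * harmonic n) := by
        rw [← exp_sum, harmonic]
        push_cast
        rw [mul_sum, mul_sum, ← sum_sub_distrib]
        congr 1
        exact sum_congr rfl fun j _ => by field_simp
    _ ≤ exp (β ^ 2 - β * log (n + 1)) := by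
        have hlog := log_add_one_le_harmonic n
        push_cast at hlog
        gcongr
        nlinarith [sum_range_inv_succ_sq_le_two n, sq_nonneg β]

lemma succ_mul_genBinom_succ (β : ℝ) (n : ℕ) :
    (n + 1) * genBinom β (n + 1) = β * ∏ j ∈ range n, (β / (j + 1) - 1) := by
  have hpos : 0 < ∏ j ∈ range n, ((j : ℝ) + 1) := prod_pos fun _ _ => by positivity
  have hfac : ((n + 1).factorial : ℝ) = (n + 1) * ∏ j ∈ range n, ((j : ℝ) + 1) := by
    rw [Nat.factorial_succ, ← prod_range_add_one_eq_factorial]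
    push_cast
    rfl
  have hprod : ∏ j ∈ range n, (β / (j + 1) - 1)
      = (∏ j ∈ range n, (β - (j + 1))) / ∏ j ∈ range n, ((j : ℝ) + 1) := by
    rw [← prod_div_distrib]
    exact prod_congr rfl fun j _ => by field_simp
  rw [genBinom, hfac, prod_range_succ', hprod]
  push_cast
  field_simp
  ring

lemma abs_genBinom_le {β : ℝ} (hβ : 0 ≤ β) {p : ℕ} (hp : 0 < p) :
    |genBinom β p| ≤ exp (β ^ 2 + β) / (p : ℝ) ^ (β + 1) := by
  obtain ⟨n, rfl⟩ := Nat.exists_eq_add_one_of_ne_zero hp.ne'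
  have hn : (0 : ℝ) < n + 1 := by positivity
  have hprod : (n + 1) * |genBinom β (n + 1)| ≤ β * exp (β ^ 2 - β * log (n + 1)) := by
    rw [← abs_of_pos hn, ← abs_mul, abs_of_pos hn, succ_mul_genBinom_succ, abs_mul,
      abs_of_nonneg hβ, abs_prod]
    gcongr
    refine (le_of_eq (prod_congr rfl fun j _ => ?_)).trans (prod_abs_one_sub_div_le β hβ n)
    rw [← abs_neg, neg_sub]
  rw [le_div_iff₀ (by positivity)]
  push_cast
  calc |genBinom β (n + 1)| * ((n : ℝ) + 1) ^ (β + 1)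
      = exp (β * log (n + 1)) * ((n + 1) * |genBinom β (n + 1)|) := by
        rw [rpow_add_one hn.ne', rpow_def_of_pos hn, mul_comm (log _)]
        ring
    _ ≤ exp (β * log (n + 1)) * (β * exp (β ^ 2 - β * log (n + 1))) := by gcongr
    _ = β * exp (β ^ 2) := by rw [mul_left_comm, ← exp_add, add_sub_cancel]
    _ ≤ exp β * exp (β ^ 2) := by gcongr; linarith [add_one_le_exp β]
    _ = exp (β ^ 2 + β) := by rw [← exp_add, add_comm]

lemma sum_range_one_div_rpow_le {x₀ s : ℝ} (hx₀ : 0 < x₀) (hs : 0 < s) (n : ℕ) :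
    ∑ i ∈ range n, 1 / (x₀ + (i + 1 : ℕ)) ^ (s + 1) ≤ 1 / (s * x₀ ^ s) := by
  have hanti : AntitoneOn (fun x : ℝ => x ^ (-(s + 1))) (Set.Icc x₀ (x₀ + n)) :=
    fun x hx y _ hxy => rpow_le_rpow_of_nonpos (hx₀.trans_le hx.1) hxy (by linarith)
  have hzero : (0 : ℝ) ∉ Set.uIcc x₀ (x₀ + n) := by
    rw [Set.uIcc_of_le (by simp)]
    exact fun h => hx₀.not_ge h.1
  calc ∑ i ∈ range n, 1 / (x₀ + (i + 1 : ℕ)) ^ (s + 1)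
      = ∑ i ∈ range n, (x₀ + (i + 1 : ℕ)) ^ (-(s + 1)) :=
        sum_congr rfl fun i _ => by rw [rpow_neg (by positivity), one_div]
    _ ≤ ∫ x in x₀..x₀ + n, x ^ (-(s + 1)) := hanti.sum_le_integral
    _ = (x₀ ^ (-s) - (x₀ + n) ^ (-s)) / s := by
        rw [integral_rpow (Or.inr ⟨by linarith, hzero⟩)]
        ring_nf
    _ ≤ x₀ ^ (-s) / s := by
        gcongr
        exact sub_le_self _ (rpow_nonneg (by positivity) _)
    _ = 1 / (s * x₀ ^ s) := by
        rw [rpow_neg hx₀.le]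
        field_simp

/-- Tail bound for the series of absolute values of generalized binomial coefficients:
`Σ_{p=N+1}^∞ |C(β,p)| ≤ e^{β²+β}/(β N^β)`, where `C(β,p) = β(β-1)⋯(β-p+1)/p!`.
The tail is written via the shift `p = N+1+k`. -/
theorem tsum_abs_generalized_binomial_tail_le
    (β : ℝ) (hβ : 0 < β) (N : ℕ) (hN : 1 ≤ N) :
    Summable (fun k : ℕ =>
      |(∏ j ∈ Finset.range (N + 1 + k), (β - j)) / (Nat.factorial (N + 1 + k))|) ∧
    ∑' k : ℕ,
      |(∏ j ∈ Finset.range (N + 1 + k), (β - j)) / (Nat.factorial (N + 1 + k))| ≤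
      Real.exp (β ^ 2 + β) / (β * (N : ℝ) ^ β) := by
  set f : ℕ → ℝ := fun k => 1 / ((N : ℝ) + (k + 1 : ℕ)) ^ (β + 1)
  have hN₀ : (0 : ℝ) < N := by exact_mod_cast hN
  have hf_nonneg : ∀ k, 0 ≤ f k := fun k => by positivity
  have hf_sum : Summable f :=
    summable_of_sum_range_le hf_nonneg (sum_range_one_div_rpow_le hN₀ hβ)
  have hf_tsum : ∑' k, f k ≤ 1 / (β * (N : ℝ) ^ β) :=
    Real.tsum_le_of_sum_range_le hf_nonneg (sum_range_one_div_rpow_le hN₀ hβ)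
  have hbound : ∀ k, |genBinom β (N + 1 + k)| ≤ exp (β ^ 2 + β) * f k := fun k => by
    rw [mul_one_div]
    convert abs_genBinom_le hβ.le (p := N + 1 + k) (by omega) using 3
    push_cast
    ring
  have hsum : Summable fun k => |genBinom β (N + 1 + k)| :=
    (hf_sum.mul_left _).of_nonneg_of_le (fun _ => abs_nonneg _) hbound
  refine ⟨hsum, ?_⟩
  calc ∑' k, |genBinom β (N + 1 + k)|
      ≤ ∑' k, exp (β ^ 2 + β) * f k := hsum.tsum_le_tsum hbound (hf_sum.mul_left _)
    _ = exp (β ^ 2 + β) * ∑' k, f k := tsum_mul_left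
    _ ≤ exp (β ^ 2 + β) * (1 / (β * (N : ℝ) ^ β)) := by gcongr
    _ = exp (β ^ 2 + β) / (β * (N : ℝ) ^ β) := mul_one_div _ _
end
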